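/- arXiv:2505.07588 — 2 statements merged into one kernel-verified Lean document; each statement's English description precedes it below -/
import Mathlib

section
/- If T is a pruned tree with cat(T) = 3, then T is a path; consequently T ≅ P_n for some 5 ≤ n ≤ 8. -/
/-!
Since `cat(T) = 3`, every vertex is captured within three cuts and some vertex is not captured
within two. A cat in the middle of a path with `2 ^ k` edges survives `k` cuts: a cut destroys
at most one half, and the cat runs to the middle of the other. Hence `T` has no path with eight
edges, and no vertex with two branches of length three and a further neighbour. Together with
the pruning rules this bounds every degree by two: a vertex of degree at least three would carry
exactly one leaf, one pendant `P₂` and one long branch, which is forbidden by rule (iii). So `T`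
is a path `P_n` with `n ≤ 8`, and `n ≥ 5` because in `P_n` with `n ≤ 4` cutting the edge after
the second vertex leaves the cat in a component with at most one edge.
-/

open SimpleGraph

universe u

/-- The cat can move from `u` to `w` in `G`: there is a nontrivial path,
equivalently `w ≠ u` and `w` is reachable from `u`. -/
def CatMove {V : Type u} (G : SimpleGraph V) (u w : V) : Prop :=
  u ≠ w ∧ G.Reachable u w

/-- `CapturedIn G v n` : with the cat on `v` and the herder to cut next,
the herder can guarantee that the cat is isolated after at most `n` edge deletions. -/
inductive CapturedIn {V : Type u} : SimpleGraph V → V → ℕ → Prop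
  | isolated {G : SimpleGraph V} {v : V} {n : ℕ} (h : ∀ w, ¬ G.Adj v w) :
      CapturedIn G v n
  | cut {G : SimpleGraph V} {v : V} {n : ℕ} (e : Sym2 V) (he : e ∈ G.edgeSet)
      (h : ∀ w, CatMove (G.deleteEdges {e}) v w → CapturedIn (G.deleteEdges {e}) w n) :
      CapturedIn G v (n + 1)

/-- The cat number of `G` with the cat starting at `v` (the game value; `⊤` if
the herder cannot guarantee capture within any fixed number of cuts). -/
noncomputable def catVNum {V : Type u} (G : SimpleGraph V) (v : V) : ℕ∞ :=
  sInf (Nat.cast '' {m : ℕ | CapturedIn G v m})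

/-- The cat number of `G`: the cat picks the best starting vertex. -/
noncomputable def catNum {V : Type u} (G : SimpleGraph V) : ℕ∞ :=
  ⨆ v, catVNum G v

/-- The cat, starting at `v`, can evade capture forever: there is a set of safe
positions (remaining graph, cat location), closed under responding to any cut. -/
def CatWinFrom {V : Type u} (G : SimpleGraph V) (v : V) : Prop :=
  ∃ S : Set (SimpleGraph V × V), (G, v) ∈ S ∧
    ∀ p ∈ S, (∃ w, p.1.Adj p.2 w) ∧
      ∀ e ∈ p.1.edgeSet, ∃ w, CatMove (p.1.deleteEdges {e}) p.2 w ∧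
        (p.1.deleteEdges {e}, w) ∈ S

/-- `G` is cat-win if the cat can evade capture forever from some starting vertex. -/
def CatWin {V : Type u} (G : SimpleGraph V) : Prop :=
  ∃ v, CatWinFrom G v

/-- `Evades G v n` : the cat on `v` has a strategy giving a valid response to each
of the next `n` cuts. -/
inductive Evades {V : Type u} : SimpleGraph V → V → ℕ → Prop
  | zero {G : SimpleGraph V} {v : V} : Evades G v 0
  | succ {G : SimpleGraph V} {v : V} {n : ℕ} (move : Sym2 V → V)
      (hmove : ∀ e ∈ G.edgeSet, CatMove (G.deleteEdges {e}) v (move e))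
      (h : ∀ e ∈ G.edgeSet, Evades (G.deleteEdges {e}) (move e) n) :
      Evades G v (n + 1)

/-- `G` is `k`-evadible for every `k`: for each `n` the cat can respond to the
first `n` cuts from a suitable starting vertex. -/
def OmegaEvadible {V : Type u} (G : SimpleGraph V) : Prop :=
  ∀ n : ℕ, ∃ v, Evades G v n

/-- The infinite complete binary tree on binary strings. -/
def binTree : SimpleGraph (List Bool) :=
  SimpleGraph.fromRel (fun a b => ∃ t : Bool, b = a ++ [t])

/-- `H` is a minor of `G` : disjoint connected branch sets, one per vertex of `H`,
with an edge of `G` between branch sets for every edge of `H`. -/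
def IsMinor {W : Type*} {V : Type u} (H : SimpleGraph W) (G : SimpleGraph V) : Prop :=
  ∃ B : W → Set V,
    (∀ w, (G.induce (B w)).Connected) ∧
    (Pairwise fun w₁ w₂ => Disjoint (B w₁) (B w₂)) ∧
    (∀ w₁ w₂, H.Adj w₁ w₂ → ∃ x ∈ B w₁, ∃ y ∈ B w₂, G.Adj x y)

/-- Every pair of distinct vertices is joined by two edge-disjoint (finite) paths. -/
def TwoEdgeConnected {V : Type u} (G : SimpleGraph V) : Prop :=
  ∀ u v : V, u ≠ v → ∃ (p q : G.Walk u v), p.IsPath ∧ q.IsPath ∧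
    ∀ e ∈ p.edges, e ∉ q.edges

/-- `x` has degree exactly 1 in `G`. -/
def DegOne {V : Type u} (G : SimpleGraph V) (x : V) : Prop :=
  ∃ a, G.neighborSet x = {a}

/-- `x` has degree exactly 2 in `G`. -/
def DegTwo {V : Type u} (G : SimpleGraph V) (x : V) : Prop :=
  ∃ a b, a ≠ b ∧ G.neighborSet x = {a, b}

/-- `x` has degree exactly 3 in `G`. -/
def DegThree {V : Type u} (G : SimpleGraph V) (x : V) : Prop :=
  ∃ a b c, a ≠ b ∧ a ≠ c ∧ b ≠ c ∧ G.neighborSet x = {a, b, c}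

/-- `x` has degree at least `k` in `G`. -/
def DegGe {V : Type u} (G : SimpleGraph V) (x : V) (k : ℕ) : Prop :=
  ∃ s : Finset V, s.card = k ∧ ∀ a ∈ s, G.Adj x a

/-- A pruned tree: a tree with (i) no vertex of degree ≥ 3 carrying two pendant
leaves, (ii) no duplicated pendant `P₂`-paths at a common vertex, and (iii) no
pendant leaf `l` in a configuration `w v u l` with `deg w = deg l = 1`,
`deg v = 2`, `deg u = 3` and a further neighbour `t` of `u` of degree ≥ 2. -/
def PrunedTree {V : Type u} (T : SimpleGraph V) : Prop :=
  T.IsTree ∧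
  (¬ ∃ x y z : V, x ≠ z ∧ T.Adj y x ∧ T.Adj y z ∧
      DegOne T x ∧ DegOne T z ∧ DegGe T y 3) ∧
  (¬ ∃ u v₁ w₁ v₂ w₂ : V, v₁ ≠ v₂ ∧
      T.Adj u v₁ ∧ T.Adj v₁ w₁ ∧ u ≠ w₁ ∧ DegTwo T v₁ ∧ DegOne T w₁ ∧
      T.Adj u v₂ ∧ T.Adj v₂ w₂ ∧ u ≠ w₂ ∧ DegTwo T v₂ ∧ DegOne T w₂) ∧
  (¬ ∃ w v u l t : V, T.Adj w v ∧ T.Adj v u ∧ T.Adj u l ∧ T.Adj u t ∧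
      w ≠ u ∧ v ≠ l ∧ w ≠ l ∧ t ≠ v ∧ t ≠ l ∧
      DegOne T l ∧ DegOne T w ∧ DegTwo T v ∧ DegThree T u ∧ DegGe T t 2)

section Game

variable {V : Type u} {G : SimpleGraph V}

theorem CapturedIn.mono {v : V} {m n : ℕ} (h : CapturedIn G v m) (hmn : m ≤ n) :
    CapturedIn G v n := by
  induction h generalizing n with
  | isolated h => exact .isolated h
  | cut e he _ ih =>
    obtain ⟨n, rfl⟩ := Nat.exists_eq_add_of_lt hmn
    exact .cut e he fun w hw => ih w hw (by omega)

theorem catVNum_le_coe_iff {v : V} {n : ℕ} : catVNum G v ≤ n ↔ CapturedIn G v n := by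
  refine ⟨fun h => ?_, fun h => sInf_le ⟨n, h, rfl⟩⟩
  by_contra hn
  have hlt : ((n + 1 : ℕ) : ℕ∞) ≤ catVNum G v := by
    refine le_sInf ?_
    rintro _ ⟨m, hm, rfl⟩
    exact Nat.cast_le.2 (Nat.lt_of_not_le fun hmn => hn (CapturedIn.mono hm hmn))
  exact absurd (hlt.trans h) (by norm_cast; omega)

theorem catNum_le_coe_iff {n : ℕ} : catNum G ≤ n ↔ ∀ v, CapturedIn G v n := by
  simp only [catNum, iSup_le_iff, catVNum_le_coe_iff]

theorem not_capturedIn_zero {v w : V} (h : G.Adj v w) : ¬ CapturedIn G v 0 := by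
  rintro (⟨hiso⟩ | _)
  exact hiso w h

theorem not_capturedIn_succ {v w : V} {n : ℕ} (hvw : G.Adj v w)
    (h : ∀ e ∈ G.edgeSet, ∃ w, CatMove (G.deleteEdges {e}) v w ∧
      ¬ CapturedIn (G.deleteEdges {e}) w n) :
    ¬ CapturedIn G v (n + 1) := by
  rintro (⟨hiso⟩ | ⟨e, he, hcut⟩)
  · exact hiso w hvw
  · obtain ⟨w, hmove, hw⟩ := h e he
    exact hw (hcut w hmove)

def SimpleGraph.IsPathSeq (G : SimpleGraph V) (f : ℕ → V) (m : ℕ) : Prop :=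
  (∀ i < m, G.Adj (f i) (f (i + 1))) ∧ Set.InjOn f {i | i ≤ m}

namespace SimpleGraph.IsPathSeq

variable {f : ℕ → V} {m : ℕ}

theorem mono (hf : IsPathSeq G f m) {n : ℕ} (hnm : n ≤ m) : IsPathSeq G f n :=
  ⟨fun i hi => hf.1 i (by omega), hf.2.mono fun i (hi : i ≤ n) => (by omega : i ≤ m)⟩

theorem reverse (hf : IsPathSeq G f m) : IsPathSeq G (fun i => f (m - i)) m := by
  refine ⟨fun i hi => ?_, fun i (hi : i ≤ m) j (hj : j ≤ m) hij => ?_⟩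
  · have := (hf.1 (m - (i + 1)) (by omega)).symm
    rwa [show m - (i + 1) + 1 = m - i by omega] at this
  · have := hf.2 (show m - i ≤ m by omega) (show m - j ≤ m by omega) hij
    omega

theorem deleteEdges (hf : IsPathSeq G f m) {e : Sym2 V}
    (he : ∀ i < m, s(f i, f (i + 1)) ≠ e) : IsPathSeq (G.deleteEdges {e}) f m :=
  ⟨fun i hi => (deleteEdges_adj ..).2 ⟨hf.1 i hi, he i hi⟩, hf.2⟩

theorem edge_ne (hf : IsPathSeq G f m) {i j : ℕ} (hi : i < m) (hj : j < m) (hij : i ≠ j) :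
    s(f i, f (i + 1)) ≠ s(f j, f (j + 1)) := by
  have hinj {a b : ℕ} (ha : a ≤ m) (hb : b ≤ m) (h : f a = f b) : a = b := hf.2 ha hb h
  rw [Ne, Sym2.eq_iff]
  rintro (⟨h1, -⟩ | ⟨h1, h2⟩)
  · exact hij (hinj (by omega) (by omega) h1)
  · have := hinj (by omega) (by omega) h1
    have := hinj (by omega) (by omega) h2
    omega

theorem reachable (hf : IsPathSeq G f m) {j : ℕ} (hj : j ≤ m) : G.Reachable (f 0) (f j) := by
  induction j with
  | zero => rfl
  | succ j ih => exact (ih (by omega)).trans (hf.1 j hj).reachable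

theorem catMove (hf : IsPathSeq G f m) {i j : ℕ} (hi : i ≤ m) (hj : j ≤ m) (hij : i ≠ j) :
    CatMove G (f i) (f j) :=
  ⟨fun h => hij (hf.2 hi hj h), (hf.reachable hi).symm.trans (hf.reachable hj)⟩

/-- The cat sits in the middle of a path with `2 ^ k` edges; whichever edge is cut, one half
survives, and the cat runs to the middle of that half (to its far end when `k = 1`). -/
theorem not_capturedIn (k : ℕ) : ∀ {G : SimpleGraph V} {f : ℕ → V},
    IsPathSeq G f (2 ^ k) → ¬ CapturedIn G (f (2 ^ k / 2)) k := by
  induction k with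
  | zero => exact fun hf => not_capturedIn_zero (hf.1 0 (by simp))
  | succ k ih =>
    intro G f hf
    set m := 2 ^ k
    have hm0 : 0 < m := by positivity
    rw [pow_succ, Nat.mul_div_cancel _ two_pos]
    rw [pow_succ] at hf
    refine not_capturedIn_succ (hf.1 m (by omega)) fun e _ => ?_
    have escape : ∀ g : ℕ → V, IsPathSeq G g (m * 2) → g m = f m →
        (∀ i < m, s(g i, g (i + 1)) ≠ e) → ∃ w, CatMove (G.deleteEdges {e}) (f m) w ∧
          ¬ CapturedIn (G.deleteEdges {e}) w k := by
      intro g hg hgm he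
      have hhalf := (hg.mono (by omega : m ≤ m * 2)).deleteEdges he
      exact ⟨g (m / 2), hgm ▸ hhalf.catMove le_rfl (by omega) (by omega), ih hhalf⟩
    by_cases he : ∀ i < m, s(f i, f (i + 1)) ≠ e
    · exact escape f hf rfl he
    · obtain ⟨i, hi, rfl⟩ : ∃ i < m, s(f i, f (i + 1)) = e := by simpa using he
      refine escape _ hf.reverse (by congr 1; omega) fun j hj => ?_
      rw [show m * 2 - j = m * 2 - (j + 1) + 1 by omega, Sym2.eq_swap]
      exact hf.edge_ne (by omega) (by omega) (by omega)

end SimpleGraph.IsPathSeq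

theorem SimpleGraph.Walk.mk_getVert_mem_edges {a b : V} (p : G.Walk a b) {i : ℕ}
    (hi : i < p.length) : s(p.getVert i, p.getVert (i + 1)) ∈ p.edges := by
  have := List.getElem_mem (l := p.edges) (by simpa using hi)
  simpa [Walk.edges, Walk.darts_getElem_eq_getVert] using this

theorem SimpleGraph.Walk.IsPath.isPathSeq {a b : V} {p : G.Walk a b} (hp : p.IsPath) :
    IsPathSeq G p.getVert p.length :=
  ⟨fun _ hi => p.adj_getVert_succ hi, hp.getVert_injOn⟩

theorem SimpleGraph.Walk.IsPath.isPathSeq_deleteEdges {a b : V} {p : G.Walk a b} (hp : p.IsPath)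
    {e : Sym2 V} (he : e ∉ p.edges) : IsPathSeq (G.deleteEdges {e}) p.getVert p.length :=
  hp.isPathSeq.deleteEdges fun _ hi h => he (h ▸ p.mk_getVert_mem_edges hi)

end Game

section UpperBound

variable {V : Type u} {G : SimpleGraph V}

def componentEdges (G : SimpleGraph V) (v : V) : Set (Sym2 V) :=
  {e ∈ G.edgeSet | ∀ x ∈ e, G.Reachable v x}

theorem mk_mem_componentEdges {v w : V} (h : G.Adj v w) : s(v, w) ∈ componentEdges G v :=
  ⟨h, fun _ hx => by rcases Sym2.mem_iff.1 hx with rfl | rfl <;> [rfl; exact h.reachable]⟩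

theorem capturedIn_of_encard_componentEdges_le {n : ℕ} :
    ∀ {G : SimpleGraph V} {v : V}, (componentEdges G v).encard ≤ n → CapturedIn G v n := by
  induction n with
  | zero =>
    intro G v h
    refine .isolated fun w hvw => ?_
    simpa [Set.encard_eq_zero.1 (nonpos_iff_eq_zero.1 h)] using mk_mem_componentEdges hvw
  | succ n ih =>
    intro G v h
    by_cases hiso : ∀ w, ¬ G.Adj v w
    · exact .isolated hiso
    obtain ⟨w, hvw⟩ := not_forall_not.1 hiso
    refine .cut s(v, w) hvw fun w' hw' => ih ?_
    have hsub : componentEdges (G.deleteEdges {s(v, w)}) w' ⊆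
        componentEdges G v \ {s(v, w)} := by
      rintro e ⟨he, hreach⟩
      rw [edgeSet_deleteEdges] at he
      exact ⟨⟨he.1, fun x hx => (hw'.2.trans (hreach x hx)).mono (deleteEdges_le _)⟩, he.2⟩
    rw [← Set.encard_sdiff_singleton_add_one (mk_mem_componentEdges hvw)] at h
    exact (Set.encard_le_encard hsub).trans (by simpa using h)

end UpperBound

section Iso

universe v

variable {V : Type u} {W : Type v} {G : SimpleGraph V} {H : SimpleGraph W}

def SimpleGraph.Iso.deleteEdges (φ : G ≃g H) (e : Sym2 V) :
    G.deleteEdges {e} ≃g H.deleteEdges {e.map φ} where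
  toEquiv := φ.toEquiv
  map_rel_iff' {a b} := by
    simp only [deleteEdges_adj, Set.mem_singleton_iff, RelIso.coe_fn_toEquiv,
      φ.map_adj_iff, ← Sym2.map_mk, (Sym2.map.injective φ.injective).eq_iff]

theorem SimpleGraph.Iso.deleteEdges_apply (φ : G ≃g H) (e : Sym2 V) (a : V) :
    φ.deleteEdges e a = φ a := rfl

theorem SimpleGraph.Iso.deleteEdges_symm_apply (φ : G ≃g H) (e : Sym2 V) (b : W) :
    (φ.deleteEdges e).symm b = φ.symm b := rfl

theorem CatMove.iso (φ : G ≃g H) {a b : V} (h : CatMove G a b) : CatMove H (φ a) (φ b) :=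
  ⟨φ.injective.ne h.1, h.2.map φ.toHom⟩

theorem CapturedIn.iso {v : V} {n : ℕ} (h : CapturedIn G v n) :
    ∀ {H : SimpleGraph W} (φ : G ≃g H), CapturedIn H (φ v) n := by
  induction h with
  | isolated h =>
    exact fun φ => .isolated fun w hw => h (φ.symm w) (by simpa using φ.symm.map_adj_iff.2 hw)
  | @cut G v n e he _ ih =>
    intro H φ
    refine .cut (e.map φ) (φ.map_mem_edgeSet_iff.2 he) fun w hw => ?_
    have hmove := hw.iso (φ.deleteEdges e).symm
    simp only [Iso.deleteEdges_symm_apply, RelIso.symm_apply_apply] at hmove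
    simpa [Iso.deleteEdges_apply] using ih (φ.symm w) hmove (φ.deleteEdges e)

end Iso

section SmallPaths

theorem capturedIn_one_of_le_pathGraph {n : ℕ} (hn : n ≤ 4) {H : SimpleGraph (Fin n)}
    (hH : H ≤ pathGraph n) (hcut : ∀ x y, H.Adj x y → ((x : ℕ) ≤ 1 ↔ (y : ℕ) ≤ 1))
    (w : Fin n) : CapturedIn H w 1 := by
  refine capturedIn_of_encard_componentEdges_le ?_
  have hside : ∀ x, H.Reachable w x → ((x : ℕ) ≤ 1 ↔ (w : ℕ) ≤ 1) := by
    rintro x ⟨p⟩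
    by_contra hx
    obtain ⟨d, -, hd₁, hd₂⟩ := p.exists_boundary_dart {z | (z : ℕ) ≤ 1 ↔ (w : ℕ) ≤ 1} Iff.rfl hx
    exact hd₂ ((hcut _ _ d.adj).symm.trans hd₁)
  rw [Nat.cast_one, Set.encard_le_one_iff]
  rintro e₁ e₂ ⟨he₁, hr₁⟩ ⟨he₂, hr₂⟩
  induction e₁, e₂ using Sym2.inductionOn₂ with | hf a b c d => ?_
  have hab := pathGraph_adj.1 (hH (H.mem_edgeSet.1 he₁))
  have hcd := pathGraph_adj.1 (hH (H.mem_edgeSet.1 he₂))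
  have := hside a (hr₁ a (Sym2.mem_mk_left a b))
  have := hside b (hr₁ b (Sym2.mem_mk_right a b))
  have := hside c (hr₂ c (Sym2.mem_mk_left c d))
  have := hside d (hr₂ d (Sym2.mem_mk_right c d))
  simp only [Sym2.eq_iff, Fin.ext_iff]
  omega

theorem capturedIn_pathGraph_two {n : ℕ} (hn : n ≤ 4) (v : Fin n) :
    CapturedIn (pathGraph n) v 2 := by
  by_cases h2 : n ≤ 2
  · refine (capturedIn_one_of_le_pathGraph hn le_rfl (fun x y h => ?_) v).mono one_le_two
    have := pathGraph_adj.1 h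
    omega
  refine .cut s(⟨1, by omega⟩, ⟨2, by omega⟩) (by simp [pathGraph_adj]) fun w _ =>
    capturedIn_one_of_le_pathGraph hn (deleteEdges_le _) (fun x y h => ?_) w
  rw [deleteEdges_adj, pathGraph_adj, Set.mem_singleton_iff, Sym2.eq_iff] at h
  simp only [Fin.ext_iff] at h
  omega

end SmallPaths

section Paths

variable {V : Type u} {G : SimpleGraph V}

open Walk

theorem degGe_three_of_adj {u a b c : V} (ha : G.Adj u a) (hb : G.Adj u b) (hc : G.Adj u c)
    (hab : a ≠ b) (hac : a ≠ c) (hbc : b ≠ c) : DegGe G u 3 := by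
  classical
  exact ⟨{a, b, c}, Finset.card_eq_three.2 ⟨a, b, c, hab, hac, hbc, rfl⟩, by simp [ha, hb, hc]⟩

theorem SimpleGraph.Walk.IsPath.exists_isPath_length_succ (hG : G.Connected)
    (hdeg : ∀ u, ¬ DegGe G u 3) {a b x : V} {p : G.Walk a b} (hp : p.IsPath)
    (hx : x ∉ p.support) : ∃ (c d : V) (q : G.Walk c d), q.IsPath ∧ q.length = p.length + 1 := by
  obtain ⟨d, -, hd₁, hd₂⟩ :=
    (hG.preconnected a x).some.exists_boundary_dart {y | y ∈ p.support} p.start_mem_support hx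
  obtain ⟨i, hdi, hi⟩ := mem_support_iff_exists_getVert.1 hd₁
  have hd₂ : d.snd ∉ p.support := hd₂
  have hadj : G.Adj (p.getVert i) d.snd := hdi ▸ d.adj
  rcases Nat.eq_zero_or_pos i with rfl | hi0
  · rw [getVert_zero] at hadj
    exact ⟨_, _, cons hadj.symm p, hp.cons hd₂, rfl⟩
  rcases hi.eq_or_lt with rfl | hlt
  · rw [getVert_length] at hadj
    exact ⟨_, _, p.concat hadj, hp.concat hd₂ hadj, length_concat p hadj⟩
  have hprev : G.Adj (p.getVert i) (p.getVert (i - 1)) := by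
    simpa [Nat.sub_add_cancel hi0] using (p.adj_getVert_succ (i := i - 1) (by omega)).symm
  refine absurd (degGe_three_of_adj hprev (p.adj_getVert_succ hlt) hadj ?_ ?_ ?_) (hdeg _)
  · exact fun h => absurd (hp.getVert_injOn (by simp; omega) (by simp; omega) h) (by omega)
  all_goals exact fun h => hd₂ (h ▸ p.getVert_mem_support _)

theorem SimpleGraph.Connected.exists_isPath_length_or_spanning (hG : G.Connected)
    (hdeg : ∀ u, ¬ DegGe G u 3) (n : ℕ) :
    (∃ (a b : V) (p : G.Walk a b), p.IsPath ∧ p.length = n) ∨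
      ∃ (a b : V) (p : G.Walk a b), p.IsPath ∧ (∀ x, x ∈ p.support) ∧ p.length < n := by
  induction n with
  | zero =>
    obtain ⟨v⟩ := hG.nonempty
    exact .inl ⟨v, v, nil, .nil, rfl⟩
  | succ n ih =>
    rcases ih with ⟨a, b, p, hp, rfl⟩ | ⟨a, b, p, hp, hspan, hlt⟩
    · by_cases hspan : ∀ x, x ∈ p.support
      · exact .inr ⟨a, b, p, hp, hspan, by omega⟩
      · obtain ⟨x, hx⟩ := not_forall.1 hspan
        exact .inl (hp.exists_isPath_length_succ hG hdeg hx)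
    · exact .inr ⟨a, b, p, hp, hspan, by omega⟩

theorem SimpleGraph.IsAcyclic.mk_mem_edges_of_adj (hG : G.IsAcyclic) {a b x y : V}
    {p : G.Walk a b} (hp : p.IsPath) (hx : x ∈ p.support) (hy : y ∈ p.support)
    (hxy : G.Adj x y) : s(x, y) ∈ p.edges := by
  classical
  have hpx := hp.takeUntil hx
  have hpy := hp.takeUntil hy
  by_cases hxq : x ∈ (p.takeUntil y hy).support
  · refine p.edges_takeUntil_subset_edges hy ?_
    rw [hG.path_concat hpx hpy hxy hxq]
    simp [edges_concat]
  · have hyp := hG.mem_support_of_ne_mem_support_of_adj_of_isPath hpx hpy hxy hxq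
    refine p.edges_takeUntil_subset_edges hx ?_
    rw [hG.path_concat hpy hpx hxy.symm hyp, Sym2.eq_swap]
    simp [edges_concat]

theorem SimpleGraph.IsAcyclic.nonempty_iso_pathGraph (hG : G.IsAcyclic) {a b : V}
    {p : G.Walk a b} (hp : p.IsPath) (hspan : ∀ x, x ∈ p.support) :
    Nonempty (G ≃g pathGraph (p.length + 1)) := by
  classical
  have htop : p.toSubgraph = ⊤ := by
    refine Subgraph.ext (by simp [verts_toSubgraph, hspan]) ?_
    ext x y
    rw [adj_toSubgraph_iff_mem_edges, Subgraph.top_adj]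
    exact ⟨p.adj_of_mem_edges, hG.mk_mem_edges_of_adj hp (hspan x) (hspan y)⟩
  obtain ⟨φ⟩ : Nonempty (p.toSubgraph.coe ≃g G) := htop ▸ ⟨Subgraph.topIso⟩
  exact ⟨(hp.pathGraphIsoToSubgraph.trans φ).symm⟩

end Paths

section Branches

variable {V : Type u} {G : SimpleGraph V}

open Walk

/-- `u x y z` is a walk without backtracking, hence a path when `G` is acyclic. -/
def LongBranch (G : SimpleGraph V) (u x : V) : Prop :=
  ∃ y z, G.Adj x y ∧ G.Adj y z ∧ y ≠ u ∧ z ≠ x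

/-- The cat runs to `x`, the middle of the path `x' u x y z` with four edges, where `x' ∈ {a, b}`
is chosen so that the edge `x' u` survives the cut. -/
theorem SimpleGraph.IsAcyclic.exists_escape_along_branch (hG : G.IsAcyclic) {u x y z a b : V}
    (hx : G.Adj u x) (hxy : G.Adj x y) (hyz : G.Adj y z) (hyu : y ≠ u) (hzx : z ≠ x)
    (ha : G.Adj a u) (hb : G.Adj b u) (hab : a ≠ b) (hax : a ≠ x) (hbx : b ≠ x) {e : Sym2 V}
    (he : e ∉ (cons hx (cons hxy (cons hyz nil))).edges) :
    ∃ w, CatMove (G.deleteEdges {e}) u w ∧ ¬ CapturedIn (G.deleteEdges {e}) w 2 := by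
  obtain ⟨x', hx', hx'x, hx'e⟩ : ∃ x', G.Adj x' u ∧ x' ≠ x ∧ s(x', u) ≠ e := by
    by_cases hae : s(a, u) = e
    · exact ⟨b, hb, hbx, fun hbe => hab (Sym2.congr_left.1 (hae.trans hbe.symm))⟩
    · exact ⟨a, ha, hax, hae⟩
  have hp : (cons hx' (cons hx (cons hxy (cons hyz nil)))).IsPath := by
    rw [hG.isPath_iff_isChain]
    simp [hx'x, hyu.symm, hzx.symm, hx.ne, hxy.ne]
  have he' : e ∉ (cons hx' (cons hx (cons hxy (cons hyz nil)))).edges := by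
    rw [edges_cons, List.mem_cons, not_or]
    exact ⟨Ne.symm hx'e, he⟩
  have hf : IsPathSeq _ _ (2 ^ 2) := hp.isPathSeq_deleteEdges he'
  exact ⟨x, hf.catMove (i := 1) (j := 2) (by norm_num) (by norm_num) (by norm_num),
    hf.not_capturedIn 2⟩

theorem SimpleGraph.IsAcyclic.not_capturedIn_three_of_longBranch (hG : G.IsAcyclic)
    {u x₁ x₂ x₃ : V} (hx₁ : G.Adj u x₁) (hx₂ : G.Adj u x₂) (hx₃ : G.Adj u x₃) (h₁₂ : x₁ ≠ x₂)
    (h₁₃ : x₁ ≠ x₃) (h₂₃ : x₂ ≠ x₃) (hb₁ : LongBranch G u x₁) (hb₂ : LongBranch G u x₂) :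
    ¬ CapturedIn G u 3 := by
  obtain ⟨y₁, z₁, hxy₁, hyz₁, hyu₁, hzx₁⟩ := hb₁
  obtain ⟨y₂, z₂, hxy₂, hyz₂, hyu₂, hzx₂⟩ := hb₂
  set A₁ := cons hx₁ (cons hxy₁ (cons hyz₁ nil))
  set A₂ := cons hx₂ (cons hxy₂ (cons hyz₂ nil))
  have hdisj : ∀ e ∈ A₁.edges, e ∉ A₂.edges := by
    have hp : (A₁.reverse.append A₂).IsPath := by
      rw [hG.isPath_iff_isChain]
      simp [A₁, A₂, h₁₂, hyu₁, hzx₁, hyu₂.symm, hzx₂.symm, hx₂.ne, hxy₂.ne, hxy₁.ne']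
    have := hp.isTrail.edges_nodup
    rw [edges_append, edges_reverse, List.nodup_append] at this
    exact fun e he₁ he₂ => this.2.2 e (List.mem_reverse.2 he₁) e he₂ rfl
  refine not_capturedIn_succ hx₁ fun e _ => ?_
  by_cases he : e ∈ A₁.edges
  · exact hG.exists_escape_along_branch hx₂ hxy₂ hyz₂ hyu₂ hzx₂ hx₁.symm hx₃.symm h₁₃ h₁₂
      h₂₃.symm (hdisj e he)
  · exact hG.exists_escape_along_branch hx₁ hxy₁ hyz₁ hyu₁ hzx₁ hx₂.symm hx₃.symm h₂₃ h₁₂.symm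
      h₁₃.symm he

end Branches

theorem Set.exists_subset_triple_of_subset_union {α : Type*} {N S₁ S₂ S₃ : Set α}
    (hN : N ⊆ S₁ ∪ S₂ ∪ S₃) (h₁ : S₁.Subsingleton) (h₂ : S₂.Subsingleton)
    (h₃ : S₃.Subsingleton) (h : 3 ≤ N.encard) : ∃ a ∈ S₁, ∃ b ∈ S₂, ∃ c ∈ S₃, N ⊆ {a, b, c} := by
  have two {S T : Set α} (hS : S.Subsingleton) (hT : T.Subsingleton) (hST : N ⊆ S ∪ T) : False :=
    absurd (h.trans ((Set.encard_le_encard hST).trans ((Set.encard_union_le S T).trans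
      (add_le_add (Set.encard_le_one_iff_subsingleton.2 hS)
        (Set.encard_le_one_iff_subsingleton.2 hT))))) (by norm_num)
  obtain ⟨a, ha⟩ : S₁.Nonempty :=
    Set.nonempty_iff_ne_empty.2 fun h0 => two h₂ h₃ (by simpa [h0] using hN)
  obtain ⟨b, hb⟩ : S₂.Nonempty :=
    Set.nonempty_iff_ne_empty.2 fun h0 => two h₁ h₃ (by simpa [h0] using hN)
  obtain ⟨c, hc⟩ : S₃.Nonempty :=
    Set.nonempty_iff_ne_empty.2 fun h0 => two h₁ h₂ (by simpa [h0] using hN)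
  refine ⟨a, ha, b, hb, c, hc, hN.trans ?_⟩
  rw [h₁.eq_singleton_of_mem ha, h₂.eq_singleton_of_mem hb, h₃.eq_singleton_of_mem hc]
  intro x
  simp only [Set.mem_union, Set.mem_insert_iff, Set.mem_singleton_iff]
  tauto

section Pruned

variable {V : Type u} {G : SimpleGraph V}

def PendantP₂ (G : SimpleGraph V) (u x : V) : Prop :=
  ∃ y, y ≠ u ∧ G.neighborSet x = {u, y} ∧ G.neighborSet y = {x}

theorem degGe_two_of_adj {u a b : V} (ha : G.Adj u a) (hb : G.Adj u b) (hab : a ≠ b) :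
    DegGe G u 2 := by
  classical
  exact ⟨{a, b}, Finset.card_pair hab, by simp [ha, hb]⟩

theorem PrunedTree.longBranch_or_leaf_or_pendantP₂ (hT : PrunedTree G) {u x : V}
    (hux : G.Adj u x) : LongBranch G u x ∨ G.neighborSet x = {u} ∨ PendantP₂ G u x := by
  refine or_iff_not_imp_left.2 fun hbr => ?_
  have hleaf {y : V} (hxy : G.Adj x y) (hyu : y ≠ u) : G.neighborSet y = {x} :=
    Set.ext fun z => ⟨fun hyz => by_contra fun hzx => hbr ⟨y, z, hxy, hyz, hyu, hzx⟩,
      fun hz => hz ▸ hxy.symm⟩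
  by_cases hy : ∃ y, G.Adj x y ∧ y ≠ u
  · obtain ⟨y, hxy, hyu⟩ := hy
    refine .inr ⟨y, hyu, Set.ext fun z => ⟨fun hxz => ?_, ?_⟩, hleaf hxy hyu⟩
    · by_contra hz
      simp only [Set.mem_insert_iff, Set.mem_singleton_iff, not_or] at hz
      exact hT.2.1 ⟨y, x, z, Ne.symm hz.2, hxy, hxz, ⟨x, hleaf hxy hyu⟩, ⟨x, hleaf hxz hz.1⟩,
        degGe_three_of_adj hux.symm hxy hxz (Ne.symm hyu) (Ne.symm hz.1) (Ne.symm hz.2)⟩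
    · rintro (rfl | rfl)
      exacts [hux.symm, hxy]
  · refine .inl (Set.ext fun z => ⟨fun hxz => ?_, fun hz => hz ▸ hux.symm⟩)
    exact not_not.1 fun hzu => hy ⟨z, hxz, hzu⟩

theorem PrunedTree.false_of_leaf_pendantP₂_longBranch (hT : PrunedTree G) {u l p t : V}
    (hl : G.neighborSet l = {u}) (hp : PendantP₂ G u p) (ht : LongBranch G u t)
    (hl' : G.Adj u l) (hp' : G.Adj u p) (ht' : G.Adj u t)
    (hN : G.neighborSet u ⊆ {l, p, t}) : False := by
  obtain ⟨y, hyu, hpy, hy⟩ := hp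
  obtain ⟨y', z', hty', hy'z', hy'u, hz't⟩ := ht
  have hmem {a b : V} (h : G.Adj a b) : b ∈ G.neighborSet a := h
  have hyp : G.Adj p y := by simp [← mem_neighborSet, hpy]
  have hlp : l ≠ p := fun h => hyu (by simpa [h ▸ hl] using hmem hyp)
  have hlt : l ≠ t := fun h => hy'u (by simpa [h ▸ hl] using hmem hty')
  have hpt : p ≠ t := by
    rintro rfl
    have : y' = y := by simpa [hpy, hy'u] using hmem hty'
    subst this
    exact hz't (by simpa [hy] using hmem hy'z')
  have hyl : y ≠ l := by
    rintro rfl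
    exact hp'.ne' (by simpa [hl] using hmem hyp.symm)
  refine hT.2.2.2 ⟨y, p, u, l, t, hyp.symm, hp'.symm, hl', ht', hyu, hlp.symm, hyl, hpt.symm,
    hlt.symm, ⟨u, hl⟩, ⟨p, hy⟩, ⟨u, y, hyu.symm, hpy⟩, ⟨l, p, t, hlp, hlt, hpt, ?_⟩,
    degGe_two_of_adj ht'.symm hty' hy'u.symm⟩
  refine hN.antisymm ?_
  rintro _ (rfl | rfl | rfl) <;> assumption

theorem PrunedTree.not_degGe_three (hT : PrunedTree G) (hcap : ∀ v, CapturedIn G v 3) (u : V) :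
    ¬ DegGe G u 3 := by
  intro hdeg
  obtain ⟨s, hs, hsu⟩ := id hdeg
  have h3 : 3 ≤ (G.neighborSet u).encard :=
    calc (3 : ℕ∞) = (s : Set V).encard := by simp [hs]
      _ ≤ _ := Set.encard_le_encard fun x hx => hsu x hx
  have hleaves : {x | G.Adj u x ∧ G.neighborSet x = {u}}.Subsingleton :=
    fun x ⟨hx, hxl⟩ y ⟨hy, hyl⟩ => by_contra fun hxy =>
      hT.2.1 ⟨x, u, y, hxy, hx, hy, ⟨u, hxl⟩, ⟨u, hyl⟩, hdeg⟩
  have hpendants : {x | G.Adj u x ∧ PendantP₂ G u x}.Subsingleton := by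
    rintro x ⟨hx, y, hyu, hxy, hy⟩ x' ⟨hx', y', hyu', hxy', hy'⟩
    by_contra hne
    exact hT.2.2.1 ⟨u, x, y, x', y', hne, hx, by simp [← mem_neighborSet, hxy], hyu.symm,
      ⟨u, y, hyu.symm, hxy⟩, ⟨x, hy⟩, hx', by simp [← mem_neighborSet, hxy'], hyu'.symm,
      ⟨u, y', hyu'.symm, hxy'⟩, ⟨x', hy'⟩⟩
  have hbranches : {x | G.Adj u x ∧ LongBranch G u x}.Subsingleton := by
    rintro x ⟨hx, hbx⟩ y ⟨hy, hby⟩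
    by_contra hxy
    obtain ⟨z, hz, hzx, hzy⟩ : ∃ z ∈ s, z ≠ x ∧ z ≠ y := by
      classical
      obtain ⟨z, hz, hz'⟩ := Finset.exists_mem_notMem_of_card_lt_card
        (s := {x, y}) (t := s) (by rw [hs]; exact (Finset.card_le_two).trans_lt (by norm_num))
      exact ⟨z, hz, by simpa [not_or] using hz'⟩
    exact hT.1.isAcyclic.not_capturedIn_three_of_longBranch hx hy (hsu z hz) hxy
      (Ne.symm hzx) (Ne.symm hzy) hbx hby (hcap u)
  have hcover : G.neighborSet u ⊆ {x | G.Adj u x ∧ G.neighborSet x = {u}} ∪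
      {x | G.Adj u x ∧ PendantP₂ G u x} ∪ {x | G.Adj u x ∧ LongBranch G u x} :=
    fun x (hx : G.Adj u x) => by simpa [hx] using (hT.longBranch_or_leaf_or_pendantP₂ hx).symm
  obtain ⟨l, ⟨hl', hl⟩, p, ⟨hp', hp⟩, t, ⟨ht', ht⟩, hN⟩ :=
    Set.exists_subset_triple_of_subset_union hcover hleaves hpendants hbranches h3
  exact hT.false_of_leaf_pendantP₂_longBranch hl hp ht hl' hp' ht' hN

end Pruned

/-- a pruned tree with cat number 3 is a path `P_n`, `5 ≤ n ≤ 8`. -/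
theorem prunedTree_catNum_three {V : Type u} (T : SimpleGraph V)
    (hp : PrunedTree T) (h3 : catNum T = 3) :
    ∃ n : ℕ, 5 ≤ n ∧ n ≤ 8 ∧ Nonempty (T ≃g SimpleGraph.pathGraph n) := by
  have hcap : ∀ v, CapturedIn T v 3 := catNum_le_coe_iff.1 h3.le
  obtain ⟨v, hv⟩ : ∃ v, ¬ CapturedIn T v 2 := by
    by_contra! h
    have := catNum_le_coe_iff.2 h
    norm_num [h3] at this
  have hdeg : ∀ u, ¬ DegGe T u 3 := hp.not_degGe_three hcap
  rcases hp.1.connected.exists_isPath_length_or_spanning hdeg 8 with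
    ⟨a, b, q, hq, hlen⟩ | ⟨a, b, q, hq, hspan, hlt⟩
  · exact absurd (hcap _) ((hlen ▸ hq.isPathSeq).not_capturedIn 3)
  obtain ⟨φ⟩ := hp.1.isAcyclic.nonempty_iso_pathGraph hq hspan
  refine ⟨q.length + 1, ?_, by omega, ⟨φ⟩⟩
  by_contra! hsmall
  exact hv (by simpa using (capturedIn_pathGraph_two (by omega) (φ v)).iso φ.symm)
end

section
/- If G is an infinite graph that is 2-edge-connected (every pair of vertices is joined by at least 2 edge-disjoint finite paths), then G is cat-win. -/
open SimpleGraph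

universe u

/-!
The cat keeps to an infinite set `C` of vertices that are pairwise 2-edge-reachable in the current
graph; in particular it always has a neighbour. When the herder deletes `s(x, y)`, the only edges
that can still separate points of `C` lie on one fixed `x`–`y` path of the remaining graph (there
are none if `s(x, y)` was a bridge), so there are finitely many. Cutting `C` along each of them
that does separate it and keeping an infinite side every time leaves an infinite `C' ⊆ C` that is
pairwise 2-edge-reachable in the new graph, and the cat walks into `C'` avoiding the deleted edge.
-/

namespace SimpleGraph

variable {V : Type*} {G : SimpleGraph V} {u w x y : V}

lemma Walk.reachable_deleteEdges_or (W : G.Walk u w) (x y : V) :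
    (G.deleteEdges {s(x, y)}).Reachable u w ∨ (G.deleteEdges {s(x, y)}).Reachable x w ∨
      (G.deleteEdges {s(x, y)}).Reachable y w := by
  induction W with
  | nil => exact .inl .rfl
  | @cons a b c hab W ih =>
    by_cases he : s(a, b) = s(x, y)
    · rcases Sym2.eq_iff.mp he with ⟨-, rfl⟩ | ⟨-, rfl⟩ <;> tauto
    · exact ih.imp_left (deleteEdges_adj.mpr ⟨hab, he⟩).reachable.trans

lemma Reachable.deleteEdges_or (h : G.Reachable u w) (x y : V) :
    (G.deleteEdges {s(x, y)}).Reachable u w ∨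
      ((G.deleteEdges {s(x, y)}).Reachable x u ∨ (G.deleteEdges {s(x, y)}).Reachable y u) ∧
      ((G.deleteEdges {s(x, y)}).Reachable x w ∨ (G.deleteEdges {s(x, y)}).Reachable y w) := by
  obtain ⟨W⟩ := h
  rcases W.reachable_deleteEdges_or x y with huw | hw
  · exact .inl huw
  rcases W.reverse.reachable_deleteEdges_or x y with hwu | hu
  · exact .inl hwu.symm
  exact .inr ⟨hu, hw⟩

lemma Reachable.deleteEdges_of_reachable_deleteEdges (h : G.Reachable u w)
    (hxy : (G.deleteEdges {s(x, y)}).Reachable x y) : (G.deleteEdges {s(x, y)}).Reachable u w := by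
  rcases h.deleteEdges_or x y with huw | ⟨hu | hu, hw | hw⟩
  · exact huw
  · exact hu.symm.trans hw
  · exact hu.symm.trans (hxy.trans hw)
  · exact hu.symm.trans (hxy.symm.trans hw)
  · exact hu.symm.trans hw

lemma reachable_deleteEdges_deleteEdges {g : Sym2 V} (hg : (G.deleteEdges {g}).Reachable u w)
    (he : (G.deleteEdges {s(x, y)}).Reachable u w)
    (hxy : (G.deleteEdges {s(x, y)}).Reachable x y →
      ((G.deleteEdges {s(x, y)}).deleteEdges {g}).Reachable x y) :
    ((G.deleteEdges {s(x, y)}).deleteEdges {g}).Reachable u w := by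
  rw [deleteEdges_deleteEdges, Set.union_comm, ← deleteEdges_deleteEdges] at hxy ⊢
  have hle : (G.deleteEdges {g}).deleteEdges {s(x, y)} ≤ G.deleteEdges {s(x, y)} :=
    deleteEdges_mono (deleteEdges_le _)
  have hends {a b : V} (ha : ((G.deleteEdges {g}).deleteEdges {s(x, y)}).Reachable x a)
      (hb : ((G.deleteEdges {g}).deleteEdges {s(x, y)}).Reachable y b)
      (hab : (G.deleteEdges {s(x, y)}).Reachable a b) :
      ((G.deleteEdges {g}).deleteEdges {s(x, y)}).Reachable x y :=
    hxy ((ha.mono hle).trans (hab.trans (hb.mono hle).symm))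
  rcases hg.deleteEdges_or x y with huw | ⟨hu | hu, hw | hw⟩
  · exact huw
  · exact hu.symm.trans hw
  · exact hu.symm.trans ((hends hu hw he).trans hw)
  · exact hu.symm.trans ((hends hw hu he.symm).symm.trans hw)
  · exact hu.symm.trans hw

lemma exists_finset_forall_notMem_reachable_deleteEdges (G : SimpleGraph V) (x y : V) :
    ∃ F : Finset (Sym2 V), ∀ g ∉ F, G.Reachable x y → (G.deleteEdges {g}).Reachable x y := by
  classical
  by_cases hxy : G.Reachable x y
  · obtain ⟨P⟩ := hxy
    exact ⟨P.edges.toFinset, fun g hg _ => (P.toDeleteEdge g (by simpa using hg)).reachable⟩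
  · exact ⟨∅, fun _ _ h => absurd h hxy⟩

lemma exists_infinite_sep_reachable_deleteEdges {C : Set V} (hC : C.Infinite)
    (hconn : ∀ u ∈ C, ∀ w ∈ C, G.Reachable u w) {u₀ w₀ : V} (hu₀ : u₀ ∈ C) (hw₀ : w₀ ∈ C)
    (hsep : ¬(G.deleteEdges {s(x, y)}).Reachable u₀ w₀) :
    ∃ a, {z ∈ C | (G.deleteEdges {s(x, y)}).Reachable a z}.Infinite := by
  have hcover : C ⊆ {z ∈ C | (G.deleteEdges {s(x, y)}).Reachable x z} ∪
      {z ∈ C | (G.deleteEdges {s(x, y)}).Reachable y z} := by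
    intro z hz
    rcases (hconn u₀ hu₀ z hz).deleteEdges_or x y with h₁ | ⟨-, h₁⟩
    · rcases (hconn z hz w₀ hw₀).deleteEdges_or x y with h₂ | ⟨h₂, -⟩
      · exact absurd (h₁.trans h₂) hsep
      · exact h₂.imp (⟨hz, ·⟩) (⟨hz, ·⟩)
    · exact h₁.imp (⟨hz, ·⟩) (⟨hz, ·⟩)
  rcases Set.infinite_union.mp (hC.mono hcover) with h | h
  exacts [⟨x, h⟩, ⟨y, h⟩]

/-- When an edge `s(x, y)` of `F` does disconnect `C`, pass to an infinite part of `C` lying in one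
component of `G - s(x, y)`, in which `F` minus that edge is again enough. -/
theorem exists_infinite_subset_isEdgeReachable_two (F : Finset (Sym2 V)) :
    ∀ (G : SimpleGraph V) (C : Set V), C.Infinite → (∀ u ∈ C, ∀ w ∈ C, G.Reachable u w) →
      (∀ g ∉ F, ∀ u ∈ C, ∀ w ∈ C, (G.deleteEdges {g}).Reachable u w) →
      ∃ C' ⊆ C, C'.Infinite ∧ ∀ u ∈ C', ∀ w ∈ C', G.IsEdgeReachable 2 u w := by
  classical
  induction F using Finset.induction_on with
  | empty =>
    intro G C hC _ hrob
    exact ⟨C, subset_rfl, hC, fun u hu w hw =>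
      isEdgeReachable_two.mpr fun g => hrob g (Finset.notMem_empty g) u hu w hw⟩
  | @insert f F _ ih =>
    intro G C hC hconn hrob
    by_cases hf : ∀ u ∈ C, ∀ w ∈ C, (G.deleteEdges {f}).Reachable u w
    · refine ih G C hC hconn fun g hg => ?_
      by_cases hgf : g = f
      · exact hgf ▸ hf
      · exact hrob g (by simp [hgf, hg])
    push Not at hf
    obtain ⟨u₀, hu₀, w₀, hw₀, hsep⟩ := hf
    induction f using Sym2.ind with
    | h x y =>
    have hxy : ¬(G.deleteEdges {s(x, y)}).Reachable x y := fun hxy =>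
      hsep ((hconn u₀ hu₀ w₀ hw₀).deleteEdges_of_reachable_deleteEdges hxy)
    obtain ⟨a, ha⟩ := exists_infinite_sep_reachable_deleteEdges hC hconn hu₀ hw₀ hsep
    have hside : ∀ u ∈ {z ∈ C | (G.deleteEdges {s(x, y)}).Reachable a z},
        ∀ w ∈ {z ∈ C | (G.deleteEdges {s(x, y)}).Reachable a z},
        (G.deleteEdges {s(x, y)}).Reachable u w :=
      fun u hu w hw => hu.2.symm.trans hw.2
    obtain ⟨C', hC'C, hC', h2⟩ := ih _ _ ha hside fun g hg u hu w hw => by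
      have hg' : (G.deleteEdges {g}).Reachable u w := by
        by_cases hgf : g = s(x, y)
        · exact hgf ▸ hside u hu w hw
        · exact hrob g (by simp [hgf, hg]) u hu.1 w hw.1
      exact reachable_deleteEdges_deleteEdges hg' (hside u hu w hw) (absurd · hxy)
    exact ⟨C', hC'C.trans (Set.sep_subset _ _), hC', fun u hu w hw =>
      (h2 u hu w hw).mono (deleteEdges_le _)⟩

/-- Only the finitely many edges of one `x`–`y` path in `G - s(x, y)` can disconnect `C` further. -/
theorem exists_infinite_subset_isEdgeReachable_two_deleteEdges {C : Set V} (hC : C.Infinite)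
    (h2 : ∀ u ∈ C, ∀ w ∈ C, G.IsEdgeReachable 2 u w) (e : Sym2 V) :
    ∃ C' ⊆ C, C'.Infinite ∧ ∀ u ∈ C', ∀ w ∈ C', (G.deleteEdges {e}).IsEdgeReachable 2 u w := by
  induction e using Sym2.ind with
  | h x y =>
  obtain ⟨F, hF⟩ := exists_finset_forall_notMem_reachable_deleteEdges (G.deleteEdges {s(x, y)}) x y
  refine exists_infinite_subset_isEdgeReachable_two F _ C hC
    (fun u hu w hw => isEdgeReachable_two.mp (h2 u hu w hw) _) fun g hg u hu w hw => ?_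
  have huw := isEdgeReachable_two.mp (h2 u hu w hw)
  exact reachable_deleteEdges_deleteEdges (huw g) (huw _) (hF g hg)

end SimpleGraph

theorem TwoEdgeConnected.isEdgeConnected_two {V : Type*} {G : SimpleGraph V}
    (h : TwoEdgeConnected G) : G.IsEdgeConnected 2 := by
  intro u w
  rcases eq_or_ne u w with rfl | hne
  · exact .rfl
  obtain ⟨p, q, -, -, hpq⟩ := h u w hne
  refine isEdgeReachable_two.mpr fun e => ?_
  by_cases he : e ∈ p.edges
  · exact (q.toDeleteEdge e (hpq e he)).reachable
  · exact (p.toDeleteEdge e he).reachable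

theorem catWinFrom_of_isEdgeReachable_two {V : Type*} {G : SimpleGraph V} {C : Set V}
    (hC : C.Infinite) (h2 : ∀ u ∈ C, ∀ w ∈ C, G.IsEdgeReachable 2 u w) {v : V} (hv : v ∈ C) :
    CatWinFrom G v := by
  refine ⟨{p | ∃ C : Set V, C.Infinite ∧ p.2 ∈ C ∧ ∀ u ∈ C, ∀ w ∈ C, p.1.IsEdgeReachable 2 u w},
    ⟨C, hC, hv, h2⟩, ?_⟩
  rintro ⟨H, v⟩ ⟨C, hC, hv, h2⟩
  refine ⟨?_, fun e _ => ?_⟩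
  · obtain ⟨w, hw, hne⟩ := hC.nontrivial.exists_ne v
    exact (exists_adj_isEdgeReachable_two hne.symm (h2 v hv w hw)).imp fun _ h => h.1
  · obtain ⟨C', hC'C, hC', h2'⟩ := exists_infinite_subset_isEdgeReachable_two_deleteEdges hC h2 e
    obtain ⟨w, hw, hne⟩ := hC'.nontrivial.exists_ne v
    exact ⟨w, ⟨hne.symm, isEdgeReachable_two.mp (h2 v hv w (hC'C hw)) e⟩, C', hC', hw, h2'⟩

/-- an infinite 2-edge-connected graph is cat-win. -/
theorem twoEdgeConnected_catWin {V : Type u} [Infinite V] (G : SimpleGraph V)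
    (h : TwoEdgeConnected G) : CatWin G := by
  obtain ⟨v⟩ := Infinite.nonempty V
  exact ⟨v, catWinFrom_of_isEdgeReachable_two Set.infinite_univ
    (fun u _ w _ => h.isEdgeConnected_two u w) (Set.mem_univ v)⟩
end
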